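/- Let S ⊆ [ℓ+α] be the set of positions h where an independent set I contains at most one of the t nodes σ¹_(h,w¹_h), ..., σ^t_(h,w^t_h), and for i ≠ j let ψ^h_{i,j} = 1 iff both σ^i_(h,w^i_h) and σ^j_(h,w^j_h) belong to I. If for every pair i ≠ j, Σ_h ψ^h_{i,j} ≤ α, then Σ_{h=1}^{ℓ+α} Σ_{i=1}^t |I ∩ {σ^i_(h,w^i_h)}| ≤ (ℓ+α) + 2α · t(t−1)/2 ≤ ℓ + α t². -/

import Mathlib

/-!
At a position `h` let `s h` be the set of indices `i` with `σ i h ∈ I`. Since `n ≤ 1 + n (n - 1)`,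
the inner sum `#(s h)` is at most `1` plus the number of ordered pairs `i ≠ j` in `s h`. Summing
over `h` and exchanging the sums, every ordered pair `i ≠ j` is counted at the at most `α`
positions where both nodes lie in `I`, so the total is at most `(ℓ + α) + α t (t - 1)`.
-/

open Finset

theorem Finset.card_le_one_add_card_offDiag {α : Type*} [DecidableEq α] (s : Finset α) :
    #s ≤ 1 + #s.offDiag := by
  rw [offDiag_card]
  rcases Nat.eq_zero_or_pos #s with h | h
  · simp [h]
  · have : #s ≤ #s * #s := Nat.le_mul_self _
    nlinarith [Nat.sub_add_cancel this]

theorem Finset.sum_card_offDiag_eq_sum_card_filter {ι κ : Type*} [Fintype κ] [DecidableEq κ]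
    (H : Finset ι) (s : ι → Finset κ) :
    ∑ h ∈ H, #(s h).offDiag =
      ∑ p ∈ (univ : Finset κ).offDiag, #{h ∈ H | p.1 ∈ s h ∧ p.2 ∈ s h} := by
  have offDiag_eq (h : ι) :
      (s h).offDiag = (univ : Finset κ).offDiag.filter (fun p => p.1 ∈ s h ∧ p.2 ∈ s h) := by
    ext p
    simp only [mem_offDiag, mem_filter, mem_univ, true_and]
    tauto
  simp only [offDiag_eq, card_filter]
  exact sum_comm

theorem Finset.sum_card_le_card_add_mul {ι κ : Type*} [Fintype κ] [DecidableEq κ]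
    (H : Finset ι) (s : ι → Finset κ) (m : ℕ)
    (hpair : ∀ i j : κ, i ≠ j → #{h ∈ H | i ∈ s h ∧ j ∈ s h} ≤ m) :
    ∑ h ∈ H, #(s h) ≤ #H + m * (Fintype.card κ * (Fintype.card κ - 1)) := by
  calc ∑ h ∈ H, #(s h)
      ≤ ∑ h ∈ H, (1 + #(s h).offDiag) := sum_le_sum fun h _ => card_le_one_add_card_offDiag _
    _ = #H + ∑ p ∈ (univ : Finset κ).offDiag, #{h ∈ H | p.1 ∈ s h ∧ p.2 ∈ s h} := by
        rw [sum_add_distrib, sum_card_offDiag_eq_sum_card_filter, card_eq_sum_ones]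
    _ ≤ #H + ∑ _p ∈ (univ : Finset κ).offDiag, m := by
        gcongr with p hp
        exact hpair p.1 p.2 (mem_offDiag.1 hp).2.2
    _ = #H + m * (Fintype.card κ * (Fintype.card κ - 1)) := by
        rw [sum_const, smul_eq_mul, offDiag_card, card_univ, ← Nat.mul_sub_one, mul_comm]

/-- The counting argument of the helper claim: let `σ i h` denote the node
`σ^i_(h, w^i_h)`, and let `I` be a set of vertices. If for every pair `i ≠ j` the
number of positions `h` with both `σ i h ∈ I` and `σ j h ∈ I` is at most `α`, then
`Σ_{h=1}^{ℓ+α} Σ_{i=1}^t |I ∩ {σ i h}| ≤ (ℓ+α) + 2α·t(t−1)/2 ≤ ℓ + α t²`.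
(The set `S` of positions where `I` contains at most one of the `t` nodes is used in
the proof; for `h ∈ S` the inner sum is at most `1`, and otherwise it is bounded by
twice the number of doubly-occupied pairs.) -/
theorem stmt19 {V : Type} [DecidableEq V] (t ℓ α : ℕ) (ht : 1 ≤ t)
    (σ : Fin t → Fin (ℓ + α) → V) (I : Finset V)
    (hψ : ∀ i j : Fin t, i ≠ j →
      (Finset.univ.filter (fun h : Fin (ℓ + α) => σ i h ∈ I ∧ σ j h ∈ I)).card ≤ α) :
    (∑ h : Fin (ℓ + α), ∑ i : Fin t, (if σ i h ∈ I then 1 else 0)) ≤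
        (ℓ + α) + 2 * α * (t * (t - 1) / 2) ∧
    (ℓ + α) + 2 * α * (t * (t - 1) / 2) ≤ ℓ + α * t ^ 2 := by
  have hpairs : 2 * α * (t * (t - 1) / 2) = α * (t * (t - 1)) := by
    rw [mul_comm 2 α, mul_assoc, Nat.two_mul_div_two_of_even (Nat.even_mul_pred_self t)]
  rw [hpairs]
  constructor
  · have hcount := sum_card_le_card_add_mul univ (fun h => {i : Fin t | σ i h ∈ I}) α
      (by simpa only [mem_filter, mem_univ, true_and] using hψ)
    simpa only [card_filter, card_univ, Fintype.card_fin] using hcount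
  · obtain ⟨n, rfl⟩ := Nat.exists_eq_add_of_le' ht
    simp only [Nat.add_sub_cancel]
    nlinarith
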